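/- Let G' be a signed graph whose positive edges form a spanning tree, with negative edge set X', and with no loops. Suppose x, y, z ∈ X' are such that the fundamental circuits C_x, C_y, C_z pairwise intersect. Then there exist a, b ∈ {x,y,z} with a ≠ b such that the symmetric difference C_{{a,b}} is a balanced circuit or a short barbell of length at most (2/3)·|E(G')|. -/

import Mathlib

open Finset
open scoped Classical

noncomputable section

namespace SignedCircuitCover

variable {V E : Type} [Fintype V] [Fintype E] [DecidableEq V] [DecidableEq E]

/-- `e` is a loop. -/
def IsLoop (ends : E → Sym2 V) (e : E) : Prop := (ends e).IsDiag

/-- The vertices incident with an edge of `F`. -/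
def support (ends : E → Sym2 V) (F : Finset E) : Finset V :=
  Finset.univ.filter fun v => ∃ e ∈ F, v ∈ ends e

/-- Degree of `v` in the subgraph with edge set `F` (a loop counts twice). -/
def degree (ends : E → Sym2 V) (F : Finset E) (v : V) : ℕ :=
  ∑ e ∈ F, (if ends e = Sym2.diag v then 2 else if v ∈ ends e then 1 else 0)

/-- Reachability inside the edge set `F`. -/
def Reach (ends : E → Sym2 V) (F : Finset E) : V → V → Prop :=
  Relation.ReflTransGen fun a b => ∃ e ∈ F, ends e = s(a, b)

/-- The subgraph with edge set `F` is connected. -/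
def ConnectedOn (ends : E → Sym2 V) (F : Finset E) : Prop :=
  ∀ u ∈ support ends F, ∀ v ∈ support ends F, Reach ends F u v

/-- The whole graph is connected. -/
def Connected (ends : E → Sym2 V) : Prop :=
  ∀ u v : V, Reach ends (Finset.univ : Finset E) u v

/-- `F` is the edge set of a circuit (connected, 2-regular; a loop is a circuit). -/
def IsCircuit (ends : E → Sym2 V) (F : Finset E) : Prop :=
  F.Nonempty ∧ ConnectedOn ends F ∧ ∀ v ∈ support ends F, degree ends F v = 2

/-- `F` is the edge set of an Eulerian subgraph (connected, all degrees even). -/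
def IsEulerianOn (ends : E → Sym2 V) (F : Finset E) : Prop :=
  ConnectedOn ends F ∧ ∀ v ∈ support ends F, Even (degree ends F v)

/-- Negative edges of `F` (`sgn e = true` means `e` is negative). -/
def negEdges (sgn : E → Bool) (F : Finset E) : Finset E := F.filter fun e => sgn e = true

def IsBalancedCircuit (ends : E → Sym2 V) (sgn : E → Bool) (F : Finset E) : Prop :=
  IsCircuit ends F ∧ Even (negEdges sgn F).card

def IsUnbalancedCircuit (ends : E → Sym2 V) (sgn : E → Bool) (F : Finset E) : Prop :=
  IsCircuit ends F ∧ Odd (negEdges sgn F).card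

/-- `P` is the edge set of a path with (distinct) end-vertices `u` and `v`. -/
def IsPath (ends : E → Sym2 V) (P : Finset E) (u v : V) : Prop :=
  P.Nonempty ∧ ConnectedOn ends P ∧ u ≠ v ∧
    u ∈ support ends P ∧ v ∈ support ends P ∧
    degree ends P u = 1 ∧ degree ends P v = 1 ∧
    ∀ w ∈ support ends P, w ≠ u → w ≠ v → degree ends P w = 2

/-- A short barbell: two unbalanced circuits meeting at exactly one vertex. -/
def IsShortBarbell (ends : E → Sym2 V) (sgn : E → Bool) (F : Finset E) : Prop :=
  ∃ C₁ C₂ : Finset E, Disjoint C₁ C₂ ∧ F = C₁ ∪ C₂ ∧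
    IsUnbalancedCircuit ends sgn C₁ ∧ IsUnbalancedCircuit ends sgn C₂ ∧
    ∃ v : V, support ends C₁ ∩ support ends C₂ = {v}

/-- A long barbell: two disjoint unbalanced circuits joined by a path meeting
them only at its end-vertices. -/
def IsLongBarbell (ends : E → Sym2 V) (sgn : E → Bool) (F : Finset E) : Prop :=
  ∃ (C₁ C₂ P : Finset E) (u v : V),
    Disjoint C₁ C₂ ∧ Disjoint C₁ P ∧ Disjoint C₂ P ∧ F = C₁ ∪ C₂ ∪ P ∧
    IsUnbalancedCircuit ends sgn C₁ ∧ IsUnbalancedCircuit ends sgn C₂ ∧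
    Disjoint (support ends C₁) (support ends C₂) ∧
    IsPath ends P u v ∧
    support ends P ∩ support ends C₁ = {u} ∧
    support ends P ∩ support ends C₂ = {v}

def IsBarbell (ends : E → Sym2 V) (sgn : E → Bool) (F : Finset E) : Prop :=
  IsShortBarbell ends sgn F ∨ IsLongBarbell ends sgn F

/-- A signed circuit: a balanced circuit, a short barbell or a long barbell. -/
def IsSignedCircuit (ends : E → Sym2 V) (sgn : E → Bool) (F : Finset E) : Prop :=
  IsBalancedCircuit ends sgn F ∨ IsShortBarbell ends sgn F ∨ IsLongBarbell ends sgn F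

/-- `e` is a bridge (cut-edge) of the subgraph with edge set `F`. -/
def IsBridgeIn (ends : E → Sym2 V) (F : Finset E) (e : E) : Prop :=
  e ∈ F ∧ ∀ a b : V, ends e = s(a, b) → ¬ Reach ends (F.erase e) a b

/-- The bridges of the whole graph. -/
def bridges (ends : E → Sym2 V) : Finset E :=
  Finset.univ.filter fun e => IsBridgeIn ends Finset.univ e

/-- The non-bridge edges of the whole graph. -/
def nonbridges (ends : E → Sym2 V) : Finset E := Finset.univ \ bridges ends

/-- Reachability inside `F` avoiding the vertex `x`. -/
def ReachAvoid (ends : E → Sym2 V) (F : Finset E) (x : V) : V → V → Prop :=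
  Relation.ReflTransGen fun a b => a ≠ x ∧ b ≠ x ∧ ∃ e ∈ F, ends e = s(a, b)

/-- `x` is a cut-vertex of the subgraph with edge set `F`. -/
def IsCutVertexOn (ends : E → Sym2 V) (F : Finset E) (x : V) : Prop :=
  ∃ a ∈ support ends F, ∃ b ∈ support ends F,
    a ≠ x ∧ b ≠ x ∧ Reach ends F a b ∧ ¬ ReachAvoid ends F x a b

/-- The subgraph with edge set `F` is 2-connected (connected and without cut-vertices). -/
def TwoConnectedOn (ends : E → Sym2 V) (F : Finset E) : Prop :=
  ConnectedOn ends F ∧ ∀ x : V, ¬ IsCutVertexOn ends F x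

/-- The whole graph is 2-connected. -/
def TwoConnected (ends : E → Sym2 V) : Prop :=
  Connected ends ∧ ∀ x : V, ¬ IsCutVertexOn ends (Finset.univ : Finset E) x

/-- Total length of a collection of subgraphs. -/
def totalLength (𝒞 : List (Finset E)) : ℕ := (𝒞.map Finset.card).sum

/-- The width of the edge `e` with respect to the collection `𝒞`. -/
def widthAt (𝒞 : List (Finset E)) (e : E) : ℕ := (𝒞.filter fun C => e ∈ C).length

/-- `𝒞` covers every edge of the graph. -/
def CoversAll (𝒞 : List (Finset E)) : Prop := ∀ e : E, ∃ C ∈ 𝒞, e ∈ C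

/-- A tree of Eulerian graphs: connected, and after deleting all bridges every
component is Eulerian (equivalently all degrees in the bridgeless part are even). -/
def IsTreeOfEulerian (ends : E → Sym2 V) : Prop :=
  Connected ends ∧ ∀ v : V, Even (degree ends (nonbridges ends) v)

/-- Non-bridge non-loop edges. -/
def nbnl (ends : E → Sym2 V) : Finset E :=
  (nonbridges ends).filter fun e => ¬ IsLoop ends e

/-- A tree of circuits: connected, and after deleting all bridges and loops every
vertex has degree 0 or 2 (each component is an isolated vertex or a circuit). -/
def IsTreeOfCircuits (ends : E → Sym2 V) : Prop :=
  Connected ends ∧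
    ∀ v : V, degree ends (nbnl ends) v = 0 ∨ degree ends (nbnl ends) v = 2

/-- The balloon containing `v`: the edge set of the component of `v` in the
graph of non-bridge non-loop edges. -/
def compBalloon (ends : E → Sym2 V) (v : V) : Finset E :=
  (nbnl ends).filter fun e => ∃ w ∈ ends e, Reach ends (nbnl ends) v w

/-- Valency of the balloon of `v`: the number of bridges and loops incident
with its component. -/
def balloonValency (ends : E → Sym2 V) (v : V) : ℕ :=
  (Finset.univ.filter fun e =>
    (IsBridgeIn ends Finset.univ e ∨ IsLoop ends e) ∧
      ∃ w ∈ ends e, Reach ends (nbnl ends) v w).card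

/-- A balloon consisting of a single negative loop. -/
def IsNegLoopBalloon (ends : E → Sym2 V) (sgn : E → Bool) (B : Finset E) : Prop :=
  ∃ e : E, IsLoop ends e ∧ sgn e = true ∧ B = {e}

/-- A leaf balloon: a negative loop, or a nontrivial balloon of valency 1. -/
def IsLeafBalloon (ends : E → Sym2 V) (sgn : E → Bool) (B : Finset E) : Prop :=
  IsNegLoopBalloon ends sgn B ∨
    ∃ v : V, B = compBalloon ends v ∧ B.Nonempty ∧ balloonValency ends v = 1

/-- A leaf circuit: a negative loop, or a balloon of valency 1 which is a circuit. -/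
def IsLeafCircuit (ends : E → Sym2 V) (sgn : E → Bool) (B : Finset E) : Prop :=
  IsNegLoopBalloon ends sgn B ∨
    ∃ v : V, B = compBalloon ends v ∧ IsCircuit ends B ∧ balloonValency ends v = 1

/-- An inner circuit: a balloon of valency at least 2 which is a circuit. -/
def IsInnerCircuit (ends : E → Sym2 V) (B : Finset E) : Prop :=
  ∃ v : V, B = compBalloon ends v ∧ IsCircuit ends B ∧ 2 ≤ balloonValency ends v

/-- Number of unbalanced circuits of a tree of circuits: negative loops together
with the unbalanced (nontrivial) balloons. -/
def numUnbalancedCircuits (ends : E → Sym2 V) (sgn : E → Bool) : ℕ :=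
  (Finset.univ.filter fun e : E => IsLoop ends e ∧ sgn e = true).card +
    Set.ncard {B : Finset E |
      (∃ v : V, B = compBalloon ends v) ∧ B.Nonempty ∧ Odd (negEdges sgn B).card}

/-- Flow-admissibility: every edge lies in a signed circuit (Bouchet). -/
def FlowAdmissible (ends : E → Sym2 V) (sgn : E → Bool) : Prop :=
  ∀ e : E, ∃ C : Finset E, IsSignedCircuit ends sgn C ∧ e ∈ C

/-- `e` has exactly one end-vertex in `U`. -/
def crosses (ends : E → Sym2 V) (U : Finset V) (e : E) : Prop :=
  ∃ a b : V, ends e = s(a, b) ∧ ((a ∈ U ∧ b ∉ U) ∨ (a ∉ U ∧ b ∈ U))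

/-- Switching the signature at the vertex set `U`. -/
def switch (ends : E → Sym2 V) (U : Finset V) (sgn : E → Bool) : E → Bool :=
  fun e => if crosses ends U e then ! (sgn e) else sgn e

/-- The number of negative edges of a signature. -/
def negCount (sgn : E → Bool) : ℕ := (Finset.univ.filter fun e => sgn e = true).card

/-- `sgn` is a minimum signature: no equivalent (switched) signature has fewer
negative edges. -/
def IsMinSignature (ends : E → Sym2 V) (sgn : E → Bool) : Prop :=
  ∀ U : Finset V, negCount sgn ≤ negCount (switch ends U sgn)

/-- `{e₁, e₂}` is a 2-edge-cut of the subgraph with edge set `F`. -/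
def IsTwoEdgeCut (ends : E → Sym2 V) (F : Finset E) (e₁ e₂ : E) : Prop :=
  e₁ ≠ e₂ ∧ e₁ ∈ F ∧ e₂ ∈ F ∧ ¬ IsBridgeIn ends F e₁ ∧ ¬ IsBridgeIn ends F e₂ ∧
    (∀ a b : V, ends e₁ = s(a, b) → ¬ Reach ends ((F.erase e₁).erase e₂) a b) ∧
    (∀ a b : V, ends e₂ = s(a, b) → ¬ Reach ends ((F.erase e₁).erase e₂) a b)

/-- `b` is a bridge of `F` whose removal leaves two parts which are both unbalanced. -/
def SeparatesUnbalanced (ends : E → Sym2 V) (sgn : E → Bool) (F : Finset E) (b : E) : Prop :=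
  IsBridgeIn ends F b ∧
    ∀ a c : V, ends b = s(a, c) →
      (∃ C ⊆ F.erase b, IsUnbalancedCircuit ends sgn C ∧
        ∃ w ∈ support ends C, Reach ends (F.erase b) a w) ∧
      (∃ C ⊆ F.erase b, IsUnbalancedCircuit ends sgn C ∧
        ∃ w ∈ support ends C, Reach ends (F.erase b) c w)

/-- `T` is a spanning tree of the whole graph: spanning, connected and acyclic. -/
def IsSpanningTree (ends : E → Sym2 V) (T : Finset E) : Prop :=
  (∀ u v : V, Reach ends T u v) ∧ ∀ C ⊆ T, ¬ IsCircuit ends C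

set_option linter.unusedSectionVars false

variable {ends : E → Sym2 V} {F G : Finset E} {u v : V}

lemma mem_support_iff : v ∈ support ends F ↔ ∃ e ∈ F, v ∈ ends e := by
  simp [support]

lemma support_mono (h : F ⊆ G) : support ends F ⊆ support ends G := by
  intro v hv
  rw [mem_support_iff] at hv ⊢
  obtain ⟨e, he, hv⟩ := hv
  exact ⟨e, h he, hv⟩

lemma reach_mono (h : F ⊆ G) (hr : Reach ends F u v) : Reach ends G u v := by
  refine Relation.ReflTransGen.mono ?_ _ _ hr
  rintro a b ⟨e, he, hab⟩
  exact ⟨e, h he, hab⟩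

lemma reach_symm (hr : Reach ends F u v) : Reach ends F v u := by
  induction hr with
  | refl => exact Relation.ReflTransGen.refl
  | tail hstep h ih =>
    rename_i b c
    obtain ⟨e, he, hbc⟩ := h
    exact Relation.ReflTransGen.head ⟨e, he, by rw [hbc, Sym2.eq_swap]⟩ ih

lemma degree_eq_zero_of_not_mem_support (h : v ∉ support ends F) : degree ends F v = 0 := by
  rw [mem_support_iff] at h
  push_neg at h
  refine Finset.sum_eq_zero fun e he => ?_
  have hv : v ∉ ends e := h e he
  rw [if_neg, if_neg hv]
  intro hd
  exact hv (by rw [hd]; exact Sym2.mem_mk_left v v)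

lemma mem_support_of_degree_pos (h : 0 < degree ends F v) : v ∈ support ends F := by
  by_contra hc
  rw [degree_eq_zero_of_not_mem_support hc] at h
  omega

lemma degree_union_of_disjoint (h : Disjoint F G) (v : V) :
    degree ends (F ∪ G) v = degree ends F v + degree ends G v := by
  unfold degree
  rw [Finset.sum_union h]

lemma degree_pos_of_mem (he : (e : E) ∈ F) (hv : v ∈ ends e) : 0 < degree ends F v := by
  unfold degree
  refine Finset.sum_pos' (fun i _ => by positivity) ⟨e, he, ?_⟩
  by_cases hd : ends e = Sym2.diag v
  · rw [if_pos hd]; omega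
  · rw [if_neg hd, if_pos hv]; omega

lemma mem_support_of_mem (he : (e : E) ∈ F) (hv : v ∈ ends e) : v ∈ support ends F :=
  mem_support_iff.mpr ⟨e, he, hv⟩

/-- contribution of a single non-loop edge to the degree -/
lemma degree_singleton_of_ne {e : E} {p q : V} (hpq : p ≠ q) (hends : ends e = s(p, q)) :
    degree ends {e} v = if v = p ∨ v = q then 1 else 0 := by
  unfold degree
  rw [Finset.sum_singleton]
  have hd : ends e ≠ Sym2.diag v := by
    rw [hends]
    intro h
    have := Sym2.eq_iff.mp h
    rcases this with ⟨h1, h2⟩ | ⟨h1, h2⟩ <;> exact hpq (h1.trans h2.symm)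
  rw [if_neg hd, hends]
  by_cases hv : v = p ∨ v = q
  · rw [if_pos hv, if_pos]
    rcases hv with h | h <;> subst h <;> simp [Sym2.mem_iff]
  · rw [if_neg hv, if_neg]
    rw [Sym2.mem_iff]
    tauto

lemma degree_erase (e : E) (v : V) (he : e ∈ F) :
    degree ends F v = degree ends (F.erase e) v +
      (if ends e = Sym2.diag v then 2 else if v ∈ ends e then 1 else 0) := by
  unfold degree
  rw [← Finset.add_sum_erase _ _ he]
  ring


lemma sym2_cases (z : Sym2 V) : ∃ p q, z = s(p, q) := by
  induction z using Sym2.ind with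
  | _ x y => exact ⟨x, y, rfl⟩

lemma even_sum_degree_component (F : Finset E) (u : V) :
    Even (∑ w ∈ Finset.univ.filter (fun w => Reach ends F u w), degree ends F w) := by
  set S := Finset.univ.filter (fun w => Reach ends F u w) with hS
  have hclosed : ∀ e ∈ F, ∀ p q : V, ends e = s(p, q) → p ∈ S → q ∈ S := by
    intro e he p q hpq hp
    simp only [hS, Finset.mem_filter, Finset.mem_univ, true_and] at hp ⊢
    exact hp.tail ⟨e, he, hpq⟩
  unfold degree
  rw [Finset.sum_comm]
  refine Finset.even_sum _ (fun e he => ?_)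
  obtain ⟨p, q, hpq⟩ := sym2_cases (ends e)
  by_cases hd : p = q
  · -- loop edge
    subst hd
    have hdiag : ends e = Sym2.diag p := by rw [hpq]; rfl
    have : ∀ w ∈ S, (if ends e = Sym2.diag w then 2 else if w ∈ ends e then 1 else 0)
        = if w = p then 2 else 0 := by
      intro w _
      by_cases hw : w = p
      · subst hw; rw [if_pos hdiag, if_pos rfl]
      · rw [if_neg, if_neg, if_neg hw]
        · rw [hpq, Sym2.mem_iff]; tauto
        · rw [hdiag]; intro h; exact hw (Sym2.diag_injective h).symm
    rw [Finset.sum_congr rfl this, Finset.sum_ite_eq' S p (fun _ => 2)]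
    split <;> simp
  · -- non-loop
    have hnd : ∀ w : V, ends e ≠ Sym2.diag w := by
      intro w h
      rw [hpq] at h
      have := Sym2.eq_iff.mp h
      rcases this with ⟨h1, h2⟩ | ⟨h1, h2⟩ <;> exact hd (h1.trans h2.symm)
    have : ∀ w ∈ S, (if ends e = Sym2.diag w then 2 else if w ∈ ends e then 1 else 0)
        = (if w = p then 1 else 0) + (if w = q then 1 else 0) := by
      intro w _
      rw [if_neg (hnd w), hpq]
      simp only [Sym2.mem_iff]
      by_cases h1 : w = p
      · subst h1; rw [if_pos (Or.inl rfl), if_pos rfl, if_neg hd]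
      · by_cases h2 : w = q
        · subst h2; rw [if_pos (Or.inr rfl), if_neg h1, if_pos rfl]
        · rw [if_neg (by tauto), if_neg h1, if_neg h2]
    rw [Finset.sum_congr rfl this, Finset.sum_add_distrib,
      Finset.sum_ite_eq' S p (fun _ => 1), Finset.sum_ite_eq' S q (fun _ => 1)]
    have hiff : p ∈ S ↔ q ∈ S := by
      constructor
      · exact hclosed e he p q hpq
      · exact hclosed e he q p (by rw [hpq, Sym2.eq_swap]) 
    by_cases hp : p ∈ S
    · rw [if_pos hp, if_pos (hiff.mp hp)]
      exact ⟨1, rfl⟩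
    · rw [if_neg hp, if_neg (fun hq => hp (hiff.mpr hq))]
      simp

lemma exists_odd_partner {F : Finset E} {u : V} (hu : Odd (degree ends F u)) :
    ∃ w, w ≠ u ∧ Odd (degree ends F w) ∧ Reach ends F u w := by
  by_contra hc
  push_neg at hc
  have heven := even_sum_degree_component (ends := ends) F u
  set S := Finset.univ.filter (fun w => Reach ends F u w) with hS
  have hu' : u ∈ S := by
    simp only [hS, Finset.mem_filter, Finset.mem_univ, true_and]
    exact Relation.ReflTransGen.refl
  rw [← Finset.add_sum_erase _ _ hu'] at heven
  have h2 : Even (∑ w ∈ S.erase u, degree ends F w) := by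
    refine Finset.even_sum _ (fun w hw => ?_)
    rw [Finset.mem_erase] at hw
    obtain ⟨hwne, hwS⟩ := hw
    simp only [hS, Finset.mem_filter, Finset.mem_univ, true_and] at hwS
    have := hc w hwne
    rcases Nat.even_or_odd (degree ends F w) with h | h
    · exact h
    · exact absurd hwS (this h)
  rcases hu with ⟨k, hk⟩
  rcases h2 with ⟨m, hm⟩
  rcases heven with ⟨n, hn⟩
  omega

lemma reach_erase_of_even {F : Finset E} {e : E} {p q : V}
    (hdeg : ∀ w, Even (degree ends F w)) (he : e ∈ F) (hpq : ends e = s(p, q)) (hne : p ≠ q) :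
    Reach ends (F.erase e) p q := by
  have hterm : ∀ w : V, (if ends e = Sym2.diag w then 2 else if w ∈ ends e then 1 else 0)
      = if w = p ∨ w = q then 1 else 0 := by
    intro w
    have hnd : ends e ≠ Sym2.diag w := by
      rw [hpq]; intro h
      rcases Sym2.eq_iff.mp h with ⟨h1, h2⟩ | ⟨h1, h2⟩ <;> exact hne (h1.trans h2.symm)
    rw [if_neg hnd, hpq]
    simp only [Sym2.mem_iff]
  have hdeg_erase : ∀ w : V, degree ends F w = degree ends (F.erase e) w
      + (if w = p ∨ w = q then 1 else 0) := by
    intro w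
    rw [degree_erase e w he, hterm]
  have hp : Odd (degree ends (F.erase e) p) := by
    have h1 := hdeg_erase p
    rw [if_pos (Or.inl rfl)] at h1
    have h2 := hdeg p
    rcases Nat.even_or_odd (degree ends (F.erase e) p) with h | h
    · exfalso; rcases h with ⟨a, ha⟩; rcases h2 with ⟨b, hb⟩; omega
    · exact h
  obtain ⟨w, hwne, hwodd, hr⟩ := exists_odd_partner hp
  have hwq : w = q := by
    by_contra hwq
    have h1 := hdeg_erase w
    rw [if_neg (by tauto)] at h1
    have h2 := hdeg w
    rcases hwodd with ⟨a, ha⟩; rcases h2 with ⟨b, hb⟩; omega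
  exact hwq ▸ hr

/-- replace uses of edge e by a detour -/
lemma reach_erase_of_detour {F : Finset E} {e : E} {p q : V}
    (hpq : ends e = s(p, q)) (hdet : Reach ends (F.erase e) p q)
    {u v : V} (hr : Reach ends F u v) : Reach ends (F.erase e) u v := by
  induction hr with
  | refl => exact Relation.ReflTransGen.refl
  | tail hstep h ih =>
    rename_i b c
    refine ih.trans ?_
    obtain ⟨f, hf, hbc⟩ := h
    by_cases hfe : f = e
    · subst hfe
      rw [hpq] at hbc
      rcases Sym2.eq_iff.mp hbc with ⟨h1, h2⟩ | ⟨h1, h2⟩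
      · subst h1; subst h2; exact hdet
      · subst h1; subst h2; exact reach_symm hdet
    · exact Relation.ReflTransGen.single ⟨f, Finset.mem_erase.mpr ⟨hfe, hf⟩, hbc⟩


lemma getLast_congr' {α : Type*} {l1 l2 : List α} (h : l1 = l2) (h1 : l1 ≠ []) (h2 : l2 ≠ []) :
    l1.getLast h1 = l2.getLast h2 := by subst h; rfl

lemma exists_nodup_chain {F : Finset E} {u v : V} (h : Reach ends F u v) :
    ∃ l : List V, List.Chain (fun a b => ∃ e ∈ F, ends e = s(a, b)) u l ∧
      (u :: l).getLast (List.cons_ne_nil u l) = v ∧ (u :: l).Nodup := by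
  induction h using Relation.ReflTransGen.head_induction_on with
  | refl => exact ⟨[], List.Chain.nil, rfl, List.nodup_singleton v⟩
  | @head a c hstep _ ih =>
    obtain ⟨l, hchain, hlast, hnodup⟩ := ih
    by_cases hmem : a ∈ c :: l
    · obtain ⟨s, t, hst⟩ := List.append_of_mem hmem
      have hsuffix : (a :: t) <:+ (c :: l) := ⟨s, hst.symm⟩
      have hchain' : List.Chain' (fun a b => ∃ e ∈ F, ends e = s(a, b)) (c :: l) := hchain
      have hchain2 : List.Chain (fun a b => ∃ e ∈ F, ends e = s(a, b)) a t :=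
        hchain'.suffix hsuffix
      refine ⟨t, hchain2, ?_, hnodup.sublist hsuffix.sublist⟩
      rw [← hlast]
      exact ((getLast_congr' hst (List.cons_ne_nil c l) (by simp)).trans
        (List.getLast_append_of_ne_nil (l := s) _ (List.cons_ne_nil a t))).symm
    · refine ⟨c :: l, List.Chain.cons hstep hchain, ?_, List.nodup_cons.mpr ⟨hmem, hnodup⟩⟩
      rw [← hlast]
      exact List.getLast_cons (List.cons_ne_nil c l)

lemma path_of_nodup_chain {F : Finset E} :
    ∀ (l : List V) (u v : V),
    List.Chain (fun a b => ∃ e ∈ F, ends e = s(a, b)) u l →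
    (u :: l).getLast (List.cons_ne_nil u l) = v → (u :: l).Nodup → u ≠ v →
    ∃ P : Finset E, P ⊆ F ∧ IsPath ends P u v ∧ support ends P ⊆ (u :: l).toFinset := by
  intro l
  induction l with
  | nil =>
    intro u v _ hlast _ huv
    exact absurd hlast huv
  | cons w l' ih =>
    intro u v hchain hlast hnodup huv
    obtain ⟨⟨e, heF, hends⟩, hchain'⟩ := List.chain_cons.mp hchain
    have hunodup := List.nodup_cons.mp hnodup
    have huw : u ≠ w := fun h => hunodup.1 (h ▸ List.mem_cons_self)
    have hu_not : u ∉ (w :: l').toFinset := fun h => hunodup.1 (List.mem_toFinset.mp h)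
    have hdeg_e : ∀ x : V, degree ends {e} x = if x = u ∨ x = w then 1 else 0 :=
      fun x => degree_singleton_of_ne huw hends
    have hmem_e : ∀ x : V, x ∈ ends e ↔ (x = u ∨ x = w) := by
      intro x; rw [hends, Sym2.mem_iff]
    cases l' with
    | nil =>
      -- single edge
      have hwv : w = v := hlast
      rw [hwv] at hends hdeg_e hmem_e huw
      refine ⟨{e}, Finset.singleton_subset_iff.mpr heF, ?_, ?_⟩
      · have hsupp : support ends {e} = {u, v} := by
          ext x
          rw [mem_support_iff]
          simp only [Finset.mem_singleton, Finset.mem_insert]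
          constructor
          · rintro ⟨f, hf, hx⟩
            rw [hf] at hx
            exact (hmem_e x).mp hx
          · rintro (h | h) <;> exact ⟨e, rfl, (hmem_e x).mpr (by tauto)⟩
        refine ⟨Finset.singleton_nonempty e, ?_, huv, ?_, ?_, ?_, ?_, ?_⟩
        · intro x hx y hy
          rw [hsupp] at hx hy
          simp only [Finset.mem_insert, Finset.mem_singleton] at hx hy
          have hstep : Reach ends {e} u v :=
            Relation.ReflTransGen.single ⟨e, Finset.mem_singleton_self e, hends⟩
          rcases hx with rfl | rfl <;> rcases hy with rfl | rfl
          · exact Relation.ReflTransGen.refl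
          · exact hstep
          · exact reach_symm hstep
          · exact Relation.ReflTransGen.refl
        · rw [hsupp]; exact Finset.mem_insert_self u {v}
        · rw [hsupp]; exact Finset.mem_insert_of_mem (Finset.mem_singleton_self v)
        · rw [hdeg_e u, if_pos (Or.inl rfl)]
        · rw [hdeg_e v, if_pos (Or.inr rfl)]
        · intro x hx hxu hxv
          rw [hsupp] at hx
          simp only [Finset.mem_insert, Finset.mem_singleton] at hx
          tauto
      · intro x hx
        rw [mem_support_iff] at hx
        obtain ⟨f, hf, hxf⟩ := hx
        rw [Finset.mem_singleton] at hf
        subst hf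
        rcases (hmem_e x).mp hxf with rfl | rfl <;> simp [← hwv]
    | cons w2 l2 =>
      have hlast' : ((w :: w2 :: l2).getLast (List.cons_ne_nil _ _)) = v := by
        rw [← hlast]
        exact (List.getLast_cons (List.cons_ne_nil _ _)).symm
      have hwv : w ≠ v := by
        intro h
        have heq : (w2 :: l2).getLast (List.cons_ne_nil w2 l2) = v := by
          rw [← hlast']
          exact (List.getLast_cons (List.cons_ne_nil _ _)).symm
        have hvmem : v ∈ w2 :: l2 := heq ▸ List.getLast_mem (List.cons_ne_nil w2 l2)
        rw [← h] at hvmem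
        exact (List.nodup_cons.mp hunodup.2).1 hvmem
      obtain ⟨P', hP'F, hpath', hsupp'⟩ := ih w v hchain' hlast' hunodup.2 hwv
      obtain ⟨hP'ne, hconn', hwv', hw_supp, hv_supp, hdegw, hdegv, hdeg_int⟩ := hpath'
      have hu_nsupp : u ∉ support ends P' := fun h => hu_not (hsupp' h)
      have heP' : e ∉ P' := by
        intro h
        exact hu_nsupp (mem_support_of_mem h ((hmem_e u).mpr (Or.inl rfl)))
      have hdisj : Disjoint ({e} : Finset E) P' := Finset.disjoint_singleton_left.mpr heP'
      have hP : insert e P' = {e} ∪ P' := rfl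
      have hdeg : ∀ x : V, degree ends (insert e P') x
          = (if x = u ∨ x = w then 1 else 0) + degree ends P' x := by
        intro x
        rw [hP, degree_union_of_disjoint hdisj, hdeg_e]
      have hsupp_ins : ∀ x : V, x ∈ support ends (insert e P') ↔
          (x = u ∨ x = w) ∨ x ∈ support ends P' := by
        intro x
        rw [mem_support_iff]
        constructor
        · rintro ⟨f, hf, hx⟩
          rcases Finset.mem_insert.mp hf with rfl | hf
          · exact Or.inl ((hmem_e x).mp hx)
          · exact Or.inr (mem_support_of_mem hf hx)
        · rintro ((rfl | rfl) | hx)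
          · exact ⟨e, Finset.mem_insert_self e P', (hmem_e x).mpr (Or.inl rfl)⟩
          · exact ⟨e, Finset.mem_insert_self e P', (hmem_e x).mpr (Or.inr rfl)⟩
          · rw [mem_support_iff] at hx
            obtain ⟨f, hf, h⟩ := hx
            exact ⟨f, Finset.mem_insert_of_mem hf, h⟩
      -- reach to w from any support vertex
      have hreach_w : ∀ x ∈ support ends (insert e P'), Reach ends (insert e P') x w := by
        intro x hx
        rcases (hsupp_ins x).mp hx with (rfl | rfl) | hx'
        · exact Relation.ReflTransGen.single ⟨e, Finset.mem_insert_self e P', hends⟩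
        · exact Relation.ReflTransGen.refl
        · exact reach_mono (Finset.subset_insert e P') (hconn' x hx' w hw_supp)
      refine ⟨insert e P', Finset.insert_subset heF hP'F, ?_, ?_⟩
      · refine ⟨Finset.insert_nonempty e P', ?_, huv, ?_, ?_, ?_, ?_, ?_⟩
        · intro x hx y hy
          exact (hreach_w x hx).trans (reach_symm (hreach_w y hy))
        · exact (hsupp_ins u).mpr (Or.inl (Or.inl rfl))
        · exact (hsupp_ins v).mpr (Or.inr hv_supp)
        · rw [hdeg u, if_pos (Or.inl rfl), degree_eq_zero_of_not_mem_support hu_nsupp]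
        · rw [hdeg v, if_neg (by tauto), hdegv]
        · intro x hx hxu hxv
          rcases (hsupp_ins x).mp hx with (rfl | rfl) | hx'
          · exact absurd rfl hxu
          · rw [hdeg x, if_pos (Or.inr rfl), hdegw]
          · by_cases hxw : x = w
            · subst hxw
              rw [hdeg x, if_pos (Or.inr rfl), hdegw]
            · rw [hdeg x, if_neg (by tauto), hdeg_int x hx' hxw hxv]
      · intro x hx
        rcases (hsupp_ins x).mp hx with (rfl | rfl) | hx'
        · simp
        · simp
        · have := hsupp' hx'
          rw [List.mem_toFinset] at this ⊢
          exact List.mem_cons_of_mem u this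

lemma path_extract {F : Finset E} {u v : V} (h : Reach ends F u v) (huv : u ≠ v) :
    ∃ P : Finset E, P ⊆ F ∧ IsPath ends P u v := by
  obtain ⟨l, hchain, hlast, hnodup⟩ := exists_nodup_chain h
  obtain ⟨P, hPF, hpath, _⟩ := path_of_nodup_chain l u v hchain hlast hnodup huv
  exact ⟨P, hPF, hpath⟩


lemma circuit_even_degree {C : Finset E} (hC : IsCircuit ends C) (w : V) :
    Even (degree ends C w) := by
  by_cases h : w ∈ support ends C
  · rw [hC.2.2 w h]; exact ⟨1, rfl⟩
  · rw [degree_eq_zero_of_not_mem_support h]; exact ⟨0, rfl⟩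

lemma degree_erase_nonloop {F : Finset E} {f : E} {p q : V} (hf : f ∈ F)
    (hends : ends f = s(p, q)) (hpq : p ≠ q) (x : V) :
    degree ends F x = degree ends (F.erase f) x + (if x = p ∨ x = q then 1 else 0) := by
  rw [degree_erase f x hf]
  congr 1
  have hnd : ends f ≠ Sym2.diag x := by
    rw [hends]; intro h
    rcases Sym2.eq_iff.mp h with ⟨h1, h2⟩ | ⟨h1, h2⟩ <;> exact hpq (h1.trans h2.symm)
  rw [if_neg hnd, hends]
  simp only [Sym2.mem_iff]

lemma circuit_of_path_insert {P : Finset E} {u v : V} {f : E}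
    (hpath : IsPath ends P u v) (hf : f ∉ P) (hends : ends f = s(u, v)) :
    IsCircuit ends (insert f P) := by
  obtain ⟨hne, hconn, huv, hu, hv, hdu, hdv, hdint⟩ := hpath
  have hdisj : Disjoint ({f} : Finset E) P := Finset.disjoint_singleton_left.mpr hf
  have hP : insert f P = {f} ∪ P := rfl
  have hdeg_f : ∀ x : V, degree ends {f} x = if x = u ∨ x = v then 1 else 0 :=
    fun x => degree_singleton_of_ne huv hends
  have hdeg : ∀ x : V, degree ends (insert f P) x
      = (if x = u ∨ x = v then 1 else 0) + degree ends P x := by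
    intro x; rw [hP, degree_union_of_disjoint hdisj, hdeg_f]
  have hsupp : support ends (insert f P) = support ends P := by
    ext x
    rw [mem_support_iff, mem_support_iff]
    constructor
    · rintro ⟨e, he, hx⟩
      rcases Finset.mem_insert.mp he with rfl | he
      · rw [hends, Sym2.mem_iff] at hx
        rcases hx with rfl | rfl
        · rw [mem_support_iff] at hu; exact hu
        · rw [mem_support_iff] at hv; exact hv
      · exact ⟨e, he, hx⟩
    · rintro ⟨e, he, hx⟩
      exact ⟨e, Finset.mem_insert_of_mem he, hx⟩
  refine ⟨Finset.insert_nonempty f P, ?_, ?_⟩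
  · intro x hx y hy
    rw [hsupp] at hx hy
    exact reach_mono (Finset.subset_insert f P) (hconn x hx y hy)
  · intro x hx
    rw [hsupp] at hx
    rw [hdeg x]
    by_cases hxu : x = u
    · subst hxu; rw [if_pos (Or.inl rfl), hdu]
    · by_cases hxv : x = v
      · subst hxv; rw [if_pos (Or.inr rfl), hdv]
      · rw [if_neg (by tauto), hdint x hx hxu hxv]

lemma path_of_circuit_erase {C : Finset E} {f : E} {p q : V}
    (hC : IsCircuit ends C) (hf : f ∈ C) (hends : ends f = s(p, q)) (hpq : p ≠ q) :
    IsPath ends (C.erase f) p q := by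
  have hreach_pq : Reach ends (C.erase f) p q :=
    reach_erase_of_even (circuit_even_degree hC) hf hends hpq
  have hdeg := degree_erase_nonloop hf hends hpq
  have hpC : p ∈ support ends C := mem_support_of_mem hf (by rw [hends]; exact Sym2.mem_mk_left p q)
  have hqC : q ∈ support ends C := mem_support_of_mem hf (by rw [hends]; exact Sym2.mem_mk_right p q)
  have hdp : degree ends (C.erase f) p = 1 := by
    have := hdeg p; rw [if_pos (Or.inl rfl), hC.2.2 p hpC] at this; omega
  have hdq : degree ends (C.erase f) q = 1 := by
    have := hdeg q; rw [if_pos (Or.inr rfl), hC.2.2 q hqC] at this; omega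
  have hpsupp : p ∈ support ends (C.erase f) := mem_support_of_degree_pos (by omega)
  have hqsupp : q ∈ support ends (C.erase f) := mem_support_of_degree_pos (by omega)
  refine ⟨?_, ?_, hpq, hpsupp, hqsupp, hdp, hdq, ?_⟩
  · rw [mem_support_iff] at hpsupp
    obtain ⟨e, he, _⟩ := hpsupp
    exact ⟨e, he⟩
  · intro x hx y hy
    have hx' := support_mono (Finset.erase_subset f C) hx
    have hy' := support_mono (Finset.erase_subset f C) hy
    exact reach_erase_of_detour hends hreach_pq (hC.2.1 x hx' y hy')
  · intro w hw hwp hwq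
    have hw' := support_mono (Finset.erase_subset f C) hw
    have := hdeg w
    rw [if_neg (by tauto), hC.2.2 w hw'] at this
    omega

lemma path_odd_degree_iff {P : Finset E} {u v : V} (hpath : IsPath ends P u v) (w : V) :
    Odd (degree ends P w) ↔ (w = u ∨ w = v) := by
  obtain ⟨_, _, huv, hu, hv, hdu, hdv, hdint⟩ := hpath
  constructor
  · intro hodd
    by_contra hc
    push_neg at hc
    by_cases hw : w ∈ support ends P
    · rw [hdint w hw hc.1 hc.2] at hodd
      exact (Nat.not_odd_iff_even.mpr ⟨1, rfl⟩) hodd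
    · rw [degree_eq_zero_of_not_mem_support hw] at hodd
      exact (Nat.not_odd_iff_even.mpr ⟨0, rfl⟩) hodd
  · rintro (rfl | rfl)
    · rw [hdu]; exact ⟨0, rfl⟩
    · rw [hdv]; exact ⟨0, rfl⟩

lemma degree_sdiff_add {F G : Finset E} (hFG : G ⊆ F) (x : V) :
    degree ends F x = degree ends (F \ G) x + degree ends G x := by
  rw [← degree_union_of_disjoint Finset.sdiff_disjoint x, Finset.sdiff_union_of_subset hFG]

/-- uniqueness of paths in an acyclic graph -/
lemma tree_path_unique (hnl : ∀ e : E, ¬ IsLoop ends e) {T P Q : Finset E} {u v : V}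
    (hacyc : ∀ C ⊆ T, ¬ IsCircuit ends C) (hPT : P ⊆ T) (hQT : Q ⊆ T)
    (hp : IsPath ends P u v) (hq : IsPath ends Q u v) : P = Q := by
  by_contra hne
  set S : Finset E := (P ∪ Q) \ (P ∩ Q) with hS
  have hSsub : S ⊆ T := fun e he => by
    rcases Finset.mem_union.mp (Finset.mem_sdiff.mp he).1 with h | h
    · exact hPT h
    · exact hQT h
  have hSne : S.Nonempty := by
    rw [Finset.nonempty_iff_ne_empty]
    intro h
    apply hne
    have hsub : P ∪ Q ⊆ P ∩ Q := by
      intro e he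
      by_contra hc
      have heS : e ∈ S := Finset.mem_sdiff.mpr ⟨he, hc⟩
      rw [h] at heS
      exact absurd heS (Finset.notMem_empty e)
    apply Finset.Subset.antisymm
    · intro e he
      exact (Finset.mem_inter.mp (hsub (Finset.mem_union_left _ he))).2
    · intro e he
      exact (Finset.mem_inter.mp (hsub (Finset.mem_union_right _ he))).1
  have hdegS : ∀ w : V, degree ends S w + 2 * degree ends (P ∩ Q) w
      = degree ends P w + degree ends Q w := by
    intro w
    have h1 : degree ends (P ∪ Q) w = degree ends S w + degree ends (P ∩ Q) w :=
      degree_sdiff_add Finset.inter_subset_union w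
    have h2 : degree ends (P ∪ Q) w + degree ends (P ∩ Q) w
        = degree ends P w + degree ends Q w := by
      unfold degree
      exact Finset.sum_union_inter
    omega
  have hSeven : ∀ w : V, Even (degree ends S w) := by
    intro w
    have hparity : (Odd (degree ends P w)) ↔ (Odd (degree ends Q w)) := by
      rw [path_odd_degree_iff hp, path_odd_degree_iff hq]
    have h3 := hdegS w
    rw [Nat.odd_iff, Nat.odd_iff] at hparity
    rw [Nat.even_iff]
    omega
  obtain ⟨f, hfS⟩ := hSne
  obtain ⟨p', q', hends'⟩ := sym2_cases (ends f)
  have hpq' : p' ≠ q' := by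
    intro h
    exact hnl f (by rw [IsLoop, hends']; exact Sym2.mk_isDiag_iff.mpr h)
  have hreach := reach_erase_of_even hSeven hfS hends' hpq'
  obtain ⟨P'', hsub'', hpath''⟩ := path_extract hreach hpq'
  have hf'' : f ∉ P'' := fun h => (Finset.mem_erase.mp (hsub'' h)).1 rfl
  have hcirc := circuit_of_path_insert hpath'' hf'' hends'
  refine hacyc (insert f P'') ?_ hcirc
  exact Finset.insert_subset (hSsub hfS)
    ((hsub''.trans (Finset.erase_subset f S)).trans hSsub)


def comp (ends : E → Sym2 V) (F : Finset E) (p : V) : Finset E :=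
  F.filter fun e => ∃ w ∈ ends e, Reach ends F p w

lemma comp_subset {F : Finset E} {p : V} : comp ends F p ⊆ F := Finset.filter_subset _ _

lemma mem_comp_of_reach {F : Finset E} {p x : V} (hr : Reach ends F p x) {e : E}
    (heF : e ∈ F) (hx : x ∈ ends e) : e ∈ comp ends F p :=
  Finset.mem_filter.mpr ⟨heF, x, hx, hr⟩

lemma reach_of_mem_comp {F : Finset E} {p : V} {e : E} (he : e ∈ comp ends F p) :
    ∀ x ∈ ends e, Reach ends F p x := by
  rw [comp, Finset.mem_filter] at he
  obtain ⟨heF, w, hw, hr⟩ := he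
  intro x hx
  obtain ⟨a, b, hab⟩ := sym2_cases (ends e)
  rw [hab, Sym2.mem_iff] at hw hx
  rcases hw with rfl | rfl <;> rcases hx with rfl | rfl
  · exact hr
  · exact hr.tail ⟨e, heF, hab⟩
  · exact hr.tail ⟨e, heF, by rw [hab, Sym2.eq_swap]⟩
  · exact hr

lemma reach_comp {F : Finset E} {p x : V} (hr : Reach ends F p x) :
    Reach ends (comp ends F p) p x := by
  induction hr with
  | refl => exact Relation.ReflTransGen.refl
  | tail hab hstep ih =>
    rename_i b c
    obtain ⟨e, he, hbc⟩ := hstep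
    have hecomp : e ∈ comp ends F p :=
      mem_comp_of_reach hab he (by rw [hbc]; exact Sym2.mem_mk_left b c)
    exact ih.tail ⟨e, hecomp, hbc⟩

lemma comp_circuit {F : Finset E} {p : V}
    (hdeg2 : ∀ w ∈ support ends F, degree ends F w = 2) (hp : p ∈ support ends F) :
    IsCircuit ends (comp ends F p) := by
  have hsupp_reach : ∀ x ∈ support ends (comp ends F p), Reach ends F p x := by
    intro x hx
    rw [mem_support_iff] at hx
    obtain ⟨e, he, hxe⟩ := hx
    exact reach_of_mem_comp he x hxe
  have hne : (comp ends F p).Nonempty := by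
    rw [mem_support_iff] at hp
    obtain ⟨e, he, hpe⟩ := hp
    exact ⟨e, mem_comp_of_reach Relation.ReflTransGen.refl he hpe⟩
  refine ⟨hne, ?_, ?_⟩
  · intro x hx y hy
    exact (reach_symm (reach_comp (hsupp_reach x hx))).trans (reach_comp (hsupp_reach y hy))
  · intro x hx
    have hrx := hsupp_reach x hx
    have hdegeq : degree ends (comp ends F p) x = degree ends F x := by
      have h1 := degree_sdiff_add (ends := ends) (F := F) (G := comp ends F p) comp_subset x
      have h2 : degree ends (F \ comp ends F p) x = 0 := by
        apply degree_eq_zero_of_not_mem_support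
        intro hmem
        rw [mem_support_iff] at hmem
        obtain ⟨e, he, hxe⟩ := hmem
        rw [Finset.mem_sdiff] at he
        exact he.2 (mem_comp_of_reach hrx he.1 hxe)
      omega
    rw [hdegeq]
    exact hdeg2 x (support_mono comp_subset hx)


/-- in a circuit, any two support vertices are joined avoiding a given edge -/
lemma circuit_reach_avoiding {C : Finset E} {f : E} {p q : V}
    (hC : IsCircuit ends C) (hf : f ∈ C) (hends : ends f = s(p, q)) (hpq : p ≠ q)
    {x y : V} (hx : x ∈ support ends C) (hy : y ∈ support ends C) :
    Reach ends (C.erase f) x y := by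
  have hdet : Reach ends (C.erase f) p q :=
    reach_erase_of_even (circuit_even_degree hC) hf hends hpq
  exact reach_erase_of_detour hends hdet (hC.2.1 x hx y hy)

/-- a circuit consisting of one extra edge over a tree is determined by that edge -/
lemma circuit_eq_of_tree (hnl : ∀ e : E, ¬ IsLoop ends e) {T : Finset E}
    (hacyc : ∀ C ⊆ T, ¬ IsCircuit ends C) {K L : Finset E} {a : E}
    (hK : IsCircuit ends K) (haK : a ∈ K) (hKT : K.erase a ⊆ T)
    (hL : IsCircuit ends L) (haL : a ∈ L) (hLT : L.erase a ⊆ T) : K = L := by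
  obtain ⟨ua, va, hua⟩ := sym2_cases (ends a)
  have huava : ua ≠ va := by
    intro h
    exact hnl a (by rw [IsLoop, hua]; exact Sym2.mk_isDiag_iff.mpr h)
  have hPK := path_of_circuit_erase hK haK hua huava
  have hPL := path_of_circuit_erase hL haL hua huava
  have heq := tree_path_unique hnl hacyc hKT hLT hPK hPL
  have h1 : K = insert a (K.erase a) := (Finset.insert_erase haK).symm
  have h2 : L = insert a (L.erase a) := (Finset.insert_erase haL).symm
  rw [h1, h2, heq]


lemma pair_lemma (ends : E → Sym2 V) (sgn : E → Bool)
    (hnl : ∀ e : E, ¬ IsLoop ends e)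
    (hT : IsSpanningTree ends (Finset.univ.filter fun e => sgn e = false))
    {Ca Cb : Finset E} {a b : E} (ha : sgn a = true) (hb : sgn b = true) (hab : a ≠ b)
    (hCa : IsCircuit ends Ca)
    (hCaT : Ca ⊆ insert a (Finset.univ.filter fun e => sgn e = false)) (haCa : a ∈ Ca)
    (hCb : IsCircuit ends Cb)
    (hCbT : Cb ⊆ insert b (Finset.univ.filter fun e => sgn e = false)) (hbCb : b ∈ Cb)
    (hsupp : (support ends Ca ∩ support ends Cb).Nonempty) :
    IsBalancedCircuit ends sgn ((Ca ∪ Cb) \ (Ca ∩ Cb)) ∨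
      IsShortBarbell ends sgn ((Ca ∪ Cb) \ (Ca ∩ Cb)) := by
  set T : Finset E := Finset.univ.filter fun e => sgn e = false with hTdef
  have hacyc := hT.2
  have hmemT : ∀ e : E, e ∈ T ↔ sgn e = false := by intro e; simp [hTdef]
  have haT : a ∉ T := by rw [hmemT]; simp [ha]
  have hbT : b ∉ T := by rw [hmemT]; simp [hb]
  have hCaT' : Ca.erase a ⊆ T := by
    intro e he
    rw [Finset.mem_erase] at he
    rcases Finset.mem_insert.mp (hCaT he.2) with h | h
    · exact absurd h he.1
    · exact h
  have hCbT' : Cb.erase b ⊆ T := by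
    intro e he
    rw [Finset.mem_erase] at he
    rcases Finset.mem_insert.mp (hCbT he.2) with h | h
    · exact absurd h he.1
    · exact h
  have hbCa : b ∉ Ca := by
    intro h
    rcases Finset.mem_insert.mp (hCaT h) with h' | h'
    · exact hab h'.symm
    · exact hbT h'
  have haCb : a ∉ Cb := by
    intro h
    rcases Finset.mem_insert.mp (hCbT h) with h' | h'
    · exact hab h'
    · exact haT h'
  obtain ⟨ua, va, hua⟩ := sym2_cases (ends a)
  have huava : ua ≠ va := fun h => hnl a (by rw [IsLoop, hua]; exact Sym2.mk_isDiag_iff.mpr h)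
  obtain ⟨ub, vb, hub⟩ := sym2_cases (ends b)
  have hubvb : ub ≠ vb := fun h => hnl b (by rw [IsLoop, hub]; exact Sym2.mk_isDiag_iff.mpr h)
  have hnegCa : negEdges sgn Ca = {a} := by
    ext e
    rw [negEdges, Finset.mem_filter, Finset.mem_singleton]
    constructor
    · rintro ⟨heCa, hesgn⟩
      rcases Finset.mem_insert.mp (hCaT heCa) with h | h
      · exact h
      · rw [hmemT] at h; rw [h] at hesgn; exact absurd hesgn (by simp)
    · rintro rfl; exact ⟨haCa, ha⟩
  have hnegCb : negEdges sgn Cb = {b} := by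
    ext e
    rw [negEdges, Finset.mem_filter, Finset.mem_singleton]
    constructor
    · rintro ⟨heCb, hesgn⟩
      rcases Finset.mem_insert.mp (hCbT heCb) with h | h
      · exact h
      · rw [hmemT] at h; rw [h] at hesgn; exact absurd hesgn (by simp)
    · rintro rfl; exact ⟨hbCb, hb⟩
  have hshared : ∀ v, v ∈ support ends Ca → v ∈ support ends Cb →
      ∀ w, w ∈ support ends Ca → w ∈ support ends Cb → v ≠ w →
      ∃ Q : Finset E, Q.Nonempty ∧ Q ⊆ Ca ∩ Cb ∧ v ∈ support ends Q := by
    intro v hva hvb w hwa hwb hvw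
    have hra : Reach ends (Ca.erase a) v w :=
      circuit_reach_avoiding hCa haCa hua huava hva hwa
    obtain ⟨Qa, hQa_sub, hQa⟩ := path_extract hra hvw
    have hrb : Reach ends (Cb.erase b) v w :=
      circuit_reach_avoiding hCb hbCb hub hubvb hvb hwb
    obtain ⟨Qb, hQb_sub, hQb⟩ := path_extract hrb hvw
    have heq := tree_path_unique hnl hacyc (hQa_sub.trans hCaT') (hQb_sub.trans hCbT') hQa hQb
    refine ⟨Qa, hQa.1, ?_, hQa.2.2.2.1⟩
    intro e he
    rw [Finset.mem_inter]
    refine ⟨Finset.erase_subset a Ca (hQa_sub he), ?_⟩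
    exact Finset.erase_subset b Cb (hQb_sub (heq ▸ he))
  rcases Finset.eq_empty_or_nonempty (Ca ∩ Cb) with hI | hI
  · -- disjoint circuits: short barbell
    right
    have hD : (Ca ∪ Cb) \ (Ca ∩ Cb) = Ca ∪ Cb := by rw [hI, Finset.sdiff_empty]
    rw [hD]
    have hdisj : Disjoint Ca Cb := Finset.disjoint_iff_inter_eq_empty.mpr hI
    obtain ⟨v, hv⟩ := hsupp
    rw [Finset.mem_inter] at hv
    have hsingle : support ends Ca ∩ support ends Cb = {v} := by
      apply Finset.Subset.antisymm
      · intro w hw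
        rw [Finset.mem_inter] at hw
        rw [Finset.mem_singleton]
        by_contra hwv
        obtain ⟨Q, hQne, hQsub, _⟩ := hshared w hw.1 hw.2 v hv.1 hv.2 hwv
        obtain ⟨e, he⟩ := hQne
        have h := hQsub he
        rw [hI] at h
        exact absurd h (Finset.notMem_empty e)
      · intro w hw
        rw [Finset.mem_singleton] at hw
        subst hw
        exact Finset.mem_inter.mpr hv
    refine ⟨Ca, Cb, hdisj, rfl, ⟨hCa, ?_⟩, ⟨hCb, ?_⟩, v, hsingle⟩
    · rw [hnegCa, Finset.card_singleton]; exact ⟨0, rfl⟩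
    · rw [hnegCb, Finset.card_singleton]; exact ⟨0, rfl⟩
  · -- shared edges: balanced circuit
    left
    set D : Finset E := (Ca ∪ Cb) \ (Ca ∩ Cb) with hDdef
    have haD : a ∈ D := Finset.mem_sdiff.mpr
      ⟨Finset.mem_union_left _ haCa, fun h => haCb (Finset.mem_inter.mp h).2⟩
    have hbD : b ∈ D := Finset.mem_sdiff.mpr
      ⟨Finset.mem_union_right _ hbCb, fun h => hbCa (Finset.mem_inter.mp h).1⟩
    have hdegid : ∀ w : V, degree ends D w + 2 * degree ends (Ca ∩ Cb) w
        = degree ends Ca w + degree ends Cb w := by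
      intro w
      have h1 := degree_sdiff_add (ends := ends) (F := Ca ∪ Cb) (G := Ca ∩ Cb)
        Finset.inter_subset_union w
      rw [← hDdef] at h1
      have h2 : degree ends (Ca ∪ Cb) w + degree ends (Ca ∩ Cb) w
          = degree ends Ca w + degree ends Cb w := by
        unfold degree
        exact Finset.sum_union_inter
      omega
    obtain ⟨f, hfI⟩ := hI
    obtain ⟨p, q, hpq⟩ := sym2_cases (ends f)
    have hpq' : p ≠ q := fun h => hnl f (by rw [IsLoop, hpq]; exact Sym2.mk_isDiag_iff.mpr h)
    have hpCa : p ∈ support ends Ca :=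
      mem_support_of_mem (Finset.mem_inter.mp hfI).1 (by rw [hpq]; exact Sym2.mem_mk_left p q)
    have hpCb : p ∈ support ends Cb :=
      mem_support_of_mem (Finset.mem_inter.mp hfI).2 (by rw [hpq]; exact Sym2.mem_mk_left p q)
    have hSHARED : ∀ w, w ∈ support ends Ca → w ∈ support ends Cb →
        0 < degree ends (Ca ∩ Cb) w := by
      intro w hwa hwb
      by_cases hwp : w = p
      · subst hwp
        exact degree_pos_of_mem hfI (by rw [hpq]; exact Sym2.mem_mk_left w q)
      · obtain ⟨Q, hQne, hQsub, hwQ⟩ := hshared w hwa hwb p hpCa hpCb hwp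
        rw [mem_support_iff] at hwQ
        obtain ⟨e, heQ, hwe⟩ := hwQ
        exact degree_pos_of_mem (hQsub heQ) hwe
    have hIa : ∀ w, degree ends (Ca ∩ Cb) w ≤ degree ends Ca w := fun w => by
      have := degree_sdiff_add (ends := ends) (F := Ca) (G := Ca ∩ Cb)
        Finset.inter_subset_left w
      omega
    have hIb : ∀ w, degree ends (Ca ∩ Cb) w ≤ degree ends Cb w := fun w => by
      have := degree_sdiff_add (ends := ends) (F := Cb) (G := Ca ∩ Cb)
        Finset.inter_subset_right w
      omega
    have hdeg2 : ∀ w ∈ support ends D, degree ends D w = 2 := by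
      intro w hw
      have hpos : 0 < degree ends D w := by
        rw [mem_support_iff] at hw
        obtain ⟨e, he, hwe⟩ := hw
        exact degree_pos_of_mem he hwe
      have hid := hdegid w
      have hsupp_union : w ∈ support ends Ca ∨ w ∈ support ends Cb := by
        rw [mem_support_iff] at hw ⊢
        rw [mem_support_iff (F := Cb)]
        obtain ⟨e, he, hwe⟩ := hw
        rcases Finset.mem_union.mp (Finset.mem_sdiff.mp he).1 with h | h
        · exact Or.inl ⟨e, h, hwe⟩
        · exact Or.inr ⟨e, h, hwe⟩
      rcases hsupp_union with hwa | hwb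
      · by_cases hwb : w ∈ support ends Cb
        · have h1 := hCa.2.2 w hwa
          have h2 := hCb.2.2 w hwb
          have h3 := hSHARED w hwa hwb
          have h4 := hIa w
          omega
        · have h1 := hCa.2.2 w hwa
          have h2 : degree ends Cb w = 0 := degree_eq_zero_of_not_mem_support hwb
          have h3 := hIb w
          omega
      · by_cases hwa : w ∈ support ends Ca
        · have h1 := hCa.2.2 w hwa
          have h2 := hCb.2.2 w hwb
          have h3 := hSHARED w hwa hwb
          have h4 := hIa w
          omega
        · have h1 := hCb.2.2 w hwb
          have h2 : degree ends Ca w = 0 := degree_eq_zero_of_not_mem_support hwa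
          have h3 := hIa w
          omega
    have hconn : ConnectedOn ends D := by
      by_contra hc
      rw [ConnectedOn] at hc
      push_neg at hc
      obtain ⟨x, hx, y, hy, hxy⟩ := hc
      have hDx : IsCircuit ends (comp ends D x) := comp_circuit hdeg2 hx
      have hDy : IsCircuit ends (comp ends D y) := comp_circuit hdeg2 hy
      have hdisjxy : ∀ e : E, e ∈ comp ends D x → e ∈ comp ends D y → False := by
        intro e hex hey
        obtain ⟨p', q', hp'q'⟩ := sym2_cases (ends e)
        have h1 : Reach ends D x p' :=
          reach_of_mem_comp hex p' (by rw [hp'q']; exact Sym2.mem_mk_left p' q')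
        have h2 : Reach ends D y p' :=
          reach_of_mem_comp hey p' (by rw [hp'q']; exact Sym2.mem_mk_left p' q')
        exact hxy (h1.trans (reach_symm h2))
      have hsubT : ∀ K : Finset E, K ⊆ D → a ∉ K → b ∉ K → K ⊆ T := by
        intro K hKD haK hbK e he
        have heu : e ∈ Ca ∪ Cb := (Finset.mem_sdiff.mp (hKD he)).1
        rcases Finset.mem_union.mp heu with h | h
        · rcases Finset.mem_insert.mp (hCaT h) with h' | h'
          · exact absurd (h' ▸ he) haK
          · exact h'
        · rcases Finset.mem_insert.mp (hCbT h) with h' | h'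
          · exact absurd (h' ▸ he) hbK
          · exact h'
      have hax : a ∈ comp ends D x ∨ b ∈ comp ends D x := by
        by_contra hc2
        push_neg at hc2
        exact hacyc _ (hsubT _ comp_subset hc2.1 hc2.2) hDx
      have hay : a ∈ comp ends D y ∨ b ∈ comp ends D y := by
        by_contra hc2
        push_neg at hc2
        exact hacyc _ (hsubT _ comp_subset hc2.1 hc2.2) hDy
      have hident_a : ∀ K : Finset E, IsCircuit ends K → K ⊆ D → a ∈ K → b ∉ K → K = Ca := by
        intro K hK hKD haK hbK
        refine circuit_eq_of_tree hnl hacyc hK haK ?_ hCa haCa hCaT'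
        intro e he
        rw [Finset.mem_erase] at he
        have heu : e ∈ Ca ∪ Cb := (Finset.mem_sdiff.mp (hKD he.2)).1
        rcases Finset.mem_union.mp heu with h | h
        · rcases Finset.mem_insert.mp (hCaT h) with h' | h'
          · exact absurd h' he.1
          · exact h'
        · rcases Finset.mem_insert.mp (hCbT h) with h' | h'
          · exact absurd (h' ▸ he.2) hbK
          · exact h'
      have hident_b : ∀ K : Finset E, IsCircuit ends K → K ⊆ D → b ∈ K → a ∉ K → K = Cb := by
        intro K hK hKD hbK haK
        refine circuit_eq_of_tree hnl hacyc hK hbK ?_ hCb hbCb hCbT'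
        intro e he
        rw [Finset.mem_erase] at he
        have heu : e ∈ Ca ∪ Cb := (Finset.mem_sdiff.mp (hKD he.2)).1
        rcases Finset.mem_union.mp heu with h | h
        · rcases Finset.mem_insert.mp (hCaT h) with h' | h'
          · exact absurd (h' ▸ he.2) haK
          · exact h'
        · rcases Finset.mem_insert.mp (hCbT h) with h' | h'
          · exact absurd h' he.1
          · exact h'
      rcases hax with haDx | hbDx
      · have haDy : a ∉ comp ends D y := fun h => hdisjxy a haDx h
        have hbDy : b ∈ comp ends D y := by
          rcases hay with h | h
          · exact absurd h haDy
          · exact h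
        have hbDx : b ∉ comp ends D x := fun h => hdisjxy b h hbDy
        have hDxCa := hident_a _ hDx comp_subset haDx hbDx
        have hDyCb := hident_b _ hDy comp_subset hbDy haDy
        exact hdisjxy f (hDxCa ▸ (Finset.mem_inter.mp hfI).1)
          (hDyCb ▸ (Finset.mem_inter.mp hfI).2)
      · have hbDy : b ∉ comp ends D y := fun h => hdisjxy b hbDx h
        have haDy : a ∈ comp ends D y := by
          rcases hay with h | h
          · exact h
          · exact absurd h hbDy
        have haDx : a ∉ comp ends D x := fun h => hdisjxy a h haDy
        have hDxCb := hident_b _ hDx comp_subset hbDx haDx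
        have hDyCa := hident_a _ hDy comp_subset haDy hbDy
        exact hdisjxy f (hDxCb ▸ (Finset.mem_inter.mp hfI).2)
          (hDyCa ▸ (Finset.mem_inter.mp hfI).1)
    have hneg : negEdges sgn D = {a, b} := by
      ext e
      rw [negEdges, Finset.mem_filter, Finset.mem_insert, Finset.mem_singleton]
      constructor
      · rintro ⟨heD, hesgn⟩
        have heu : e ∈ Ca ∪ Cb := (Finset.mem_sdiff.mp heD).1
        rcases Finset.mem_union.mp heu with h | h
        · left
          have : e ∈ negEdges sgn Ca := Finset.mem_filter.mpr ⟨h, hesgn⟩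
          rw [hnegCa, Finset.mem_singleton] at this
          exact this
        · right
          have : e ∈ negEdges sgn Cb := Finset.mem_filter.mpr ⟨h, hesgn⟩
          rw [hnegCb, Finset.mem_singleton] at this
          exact this
      · rintro (rfl | rfl)
        · exact ⟨haD, ha⟩
        · exact ⟨hbD, hb⟩
    refine ⟨⟨⟨a, haD⟩, hconn, hdeg2⟩, ?_⟩
    rw [hneg, Finset.card_insert_of_notMem (by rw [Finset.mem_singleton]; exact hab),
      Finset.card_singleton]
    exact ⟨1, rfl⟩


lemma card_as_sum (F : Finset E) : F.card = ∑ e : E, if e ∈ F then 1 else 0 := by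
  rw [Finset.sum_ite_mem, Finset.univ_inter, Finset.card_eq_sum_ones]

lemma symmdiff_sum_bound (Cx Cy Cz : Finset E) :
    ((Cx ∪ Cy) \ (Cx ∩ Cy)).card + ((Cx ∪ Cz) \ (Cx ∩ Cz)).card
      + ((Cy ∪ Cz) \ (Cy ∩ Cz)).card ≤ 2 * Fintype.card E := by
  rw [card_as_sum ((Cx ∪ Cy) \ (Cx ∩ Cy)), card_as_sum ((Cx ∪ Cz) \ (Cx ∩ Cz)),
    card_as_sum ((Cy ∪ Cz) \ (Cy ∩ Cz)), ← Finset.sum_add_distrib, ← Finset.sum_add_distrib]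
  have : 2 * Fintype.card E = ∑ _e : E, 2 := by
    rw [Finset.sum_const, Finset.card_univ]
    ring
  rw [this]
  refine Finset.sum_le_sum fun e _ => ?_
  by_cases h1 : e ∈ Cx <;> by_cases h2 : e ∈ Cy <;> by_cases h3 : e ∈ Cz <;>
    simp [Finset.mem_sdiff, Finset.mem_union, Finset.mem_inter, h1, h2, h3]

/-- If the fundamental circuits of three distinct negative edges of
a loopless `G'` pairwise intersect, two of the edges give a symmetric difference
which is a balanced circuit or short barbell of length at most 2/3·|E(G')|. -/
theorem statement15 {V E : Type} [Fintype V] [Fintype E] [DecidableEq V] [DecidableEq E]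
    (ends : E → Sym2 V) (sgn : E → Bool)
    (hnoloops : ∀ e : E, ¬ IsLoop ends e)
    (hT : IsSpanningTree ends (Finset.univ.filter fun e => sgn e = false))
    (Cx : E → Finset E)
    (hCx : ∀ x : E, sgn x = true →
      IsCircuit ends (Cx x) ∧
      Cx x ⊆ insert x (Finset.univ.filter fun e => sgn e = false) ∧ x ∈ Cx x)
    (x y z : E) (hx : sgn x = true) (hy : sgn y = true) (hz : sgn z = true)
    (hxy : x ≠ y) (hxz : x ≠ z) (hyz : y ≠ z)
    (hixy : (support ends (Cx x) ∩ support ends (Cx y)).Nonempty)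
    (hixz : (support ends (Cx x) ∩ support ends (Cx z)).Nonempty)
    (hiyz : (support ends (Cx y) ∩ support ends (Cx z)).Nonempty) :
    ∃ a b : E, a ∈ ({x, y, z} : Finset E) ∧ b ∈ ({x, y, z} : Finset E) ∧ a ≠ b ∧
      (IsBalancedCircuit ends sgn ((Cx a ∪ Cx b) \ (Cx a ∩ Cx b)) ∨
        IsShortBarbell ends sgn ((Cx a ∪ Cx b) \ (Cx a ∩ Cx b))) ∧
      3 * ((Cx a ∪ Cx b) \ (Cx a ∩ Cx b)).card ≤ 2 * Fintype.card E := by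

  obtain ⟨hCxc, hCxT, hxCx⟩ := hCx x hx
  obtain ⟨hCyc, hCyT, hyCy⟩ := hCx y hy
  obtain ⟨hCzc, hCzT, hzCz⟩ := hCx z hz
  have hbxy := pair_lemma ends sgn hnoloops hT hx hy hxy hCxc hCxT hxCx hCyc hCyT hyCy hixy
  have hbxz := pair_lemma ends sgn hnoloops hT hx hz hxz hCxc hCxT hxCx hCzc hCzT hzCz hixz
  have hbyz := pair_lemma ends sgn hnoloops hT hy hz hyz hCyc hCyT hyCy hCzc hCzT hzCz hiyz
  have hsum := symmdiff_sum_bound (Cx x) (Cx y) (Cx z)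
  by_cases h1 : 3 * ((Cx x ∪ Cx y) \ (Cx x ∩ Cx y)).card ≤ 2 * Fintype.card E
  · exact ⟨x, y, by simp, by simp, hxy, hbxy, h1⟩
  · by_cases h2 : 3 * ((Cx x ∪ Cx z) \ (Cx x ∩ Cx z)).card ≤ 2 * Fintype.card E
    · exact ⟨x, z, by simp, by simp, hxz, hbxz, h2⟩
    · refine ⟨y, z, by simp, by simp, hyz, hbyz, by omega⟩


end SignedCircuitCover
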